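/- For any n-multilinear local differential operator A ∈ LDO(n) and any 1 ≤ i ≤ N, the characteristic of the post-composition of A with the total derivative vanishes: χ((d/dx^i) ∘ A) = 0. -/

import Mathlib

open scoped BigOperators

namespace JetBundle

/-- Multi-indices `J = (j_1,…,j_N)`. -/
abbrev MI (N : ℕ) := Fin N → ℕ

/-- A point of the infinite jet bundle `J^∞E`, with coordinates `(x^i, u_J)`. -/
abbrev JetPt (N : ℕ) := (Fin N → ℝ) × (MI N → ℝ)

/-- Real-valued functions on the infinite jet bundle. -/
abbrev Fn (N : ℕ) := JetPt N → ℝ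

/-- Partial derivative with respect to the base coordinate `x^i`. -/
noncomputable def pderivX {N : ℕ} (i : Fin N) (f : Fn N) : Fn N :=
  fun p => deriv (fun t => f (Function.update p.1 i t, p.2)) (p.1 i)

/-- Partial derivative with respect to the jet coordinate `u_J`. -/
noncomputable def pderivU {N : ℕ} (J : MI N) (f : Fn N) : Fn N :=
  fun p => deriv (fun t => f (p.1, Function.update p.2 J t)) (p.2 J)

/-- `iJ` : the multi-index `J` with its `i`-th entry increased by `1`. -/
def inc {N : ℕ} (i : Fin N) (J : MI N) : MI N := Function.update J i (J i + 1)

/-- The total derivative `d/dx^i = ∂/∂x^i + Σ_J u_{iJ} ∂/∂u_J`. -/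
noncomputable def Dtot {N : ℕ} (i : Fin N) (f : Fn N) : Fn N :=
  fun p => pderivX i f p + ∑' J : MI N, p.2 (inc i J) * pderivU J f p

/-- Iterated total derivative `(d/dx)^I`. -/
noncomputable def DPow {N : ℕ} (I : MI N) : Fn N → Fn N :=
  (List.finRange N).foldr (fun i g => (Dtot i)^[I i] ∘ g) id

/-- Iterated vertical derivative `(∂/∂u)^α` for a finitely supported exponent `α`. -/
noncomputable def UPow {N : ℕ} (α : MI N →₀ ℕ) : Fn N → Fn N :=
  α.support.toList.foldr (fun J g => (pderivU J)^[α J] ∘ g) id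

/-- A local function: a smooth function of the base coordinates and
finitely many jet coordinates `u_J`. -/
def IsLocal {N : ℕ} (f : Fn N) : Prop :=
  ∃ (S : Finset (MI N)) (g : ((Fin N → ℝ) × (↥S → ℝ)) → ℝ),
    ContDiff ℝ (⊤ : ℕ∞) g ∧ ∀ p : JetPt N, f p = g (p.1, fun J => p.2 J.1)

/-- The formal differential degree of an exponent `α`: the maximal `|J|` with `α J ≠ 0`. -/
def degf {N : ℕ} (α : MI N →₀ ℕ) : ℕ := α.support.sup fun J => ∑ i, J i

/-- Index type for the coefficients of an `n`-multilinear local differential operator: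
a tuple of multi-indices `(I_1,…,I_n)` and vertical exponents `(α_1,…,α_n)`. -/
abbrev Idx (N n : ℕ) := (Fin n → MI N) × (Fin n → (MI N →₀ ℕ))

/-- Coefficient data of an `n`-multilinear local differential operator. -/
abbrev OpData (N n : ℕ) := Idx N n → Fn N

/-- `n`-multilinear operators on functions on the jet bundle. -/
abbrev Op (N n : ℕ) := (Fin n → Fn N) → Fn N

/-- An `n`-tuple of local functions. -/
def LocalTuple {N n : ℕ} (f : Fin n → Fn N) : Prop := ∀ j, IsLocal (f j)

/-- Coefficient data is admissible if all coefficients are local functions and, for each `m`,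
only finitely many coefficients with `Σ_j deg_f(α_j) ≤ m` are nonzero. -/
def Good {N n : ℕ} (q : OpData N n) : Prop :=
  (∀ Iα, IsLocal (q Iα)) ∧
    ∀ m : ℕ, {Iα : Idx N n | q Iα ≠ 0 ∧ ∑ j, degf (Iα.2 j) ≤ m}.Finite

/-- The (unpolarized) realization of coefficient data:
`A(f_1,…,f_n) = Σ p_{I,α} Π_j (d/dx)^{I_j} (∂/∂u)^{α_j} f_j`. -/
noncomputable def realizeU {N n : ℕ} (q : OpData N n) (f : Fin n → Fn N) : Fn N :=
  fun pt => ∑' Iα : Idx N n, q Iα pt * ∏ j, DPow (Iα.1 j) (UPow (Iα.2 j) (f j)) pt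

/-- The polarized realization of coefficient data: the slot `I_1` records powers of
`d/dy_1 = Σ_j d/dx_j`, i.e. total derivatives applied to the whole product, while for `j ≥ 2`
the slot `I_j` records powers of `d/dy_j = d/dx_j` acting on the `j`-th argument:
`A(f_1,…,f_n) = Σ q_{I;α} (d/dx)^{I_1} [ (∂/∂u)^{α_1}f_1 · Π_{j≥2} (d/dx)^{I_j}(∂/∂u)^{α_j} f_j ]`. -/
noncomputable def realizeP {N n : ℕ} [NeZero n] (q : OpData N n) (f : Fin n → Fn N) : Fn N :=
  fun pt => ∑' Iα : Idx N n, q Iα pt *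
    DPow (Iα.1 0) (fun p => ∏ j,
      if j = (0 : Fin n) then UPow (Iα.2 j) (f j) p
      else DPow (Iα.1 j) (UPow (Iα.2 j) (f j)) p) pt

/-- The characteristic, on polarized coefficient data:
`χ(q)_{(0,I_2,…,I_n);α} := Σ_{I_1} (−1)^{|I_1|} (d/dx)^{I_1} q_{I_1,I_2,…,I_n;α}`. -/
noncomputable def chiData {N n : ℕ} [NeZero n] (q : OpData N n) : OpData N n :=
  fun Iα =>
    if Iα.1 0 = 0 then
      fun pt => ∑' K : MI N,
        (-1 : ℝ) ^ (∑ i, K i) * DPow K (q (Function.update Iα.1 0 K, Iα.2)) pt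
    else 0

/-- `q` is a polarized presentation of the operator `A` (on local functions). -/
def Presents {N n : ℕ} [NeZero n] (q : OpData N n) (A : Op N n) : Prop :=
  ∀ f, LocalTuple f → ∀ pt, A f pt = realizeP q f pt

/-- `A` is an `n`-multilinear local differential operator (unpolarized form). -/
def IsLDO {N n : ℕ} (A : Op N n) : Prop :=
  ∃ q : OpData N n, Good q ∧ ∀ f, LocalTuple f → ∀ pt, A f pt = realizeU q f pt

/-- `A` is an `n`-multilinear local differential operator, given by a polarized presentation. -/
def IsPLDO {N n : ℕ} [NeZero n] (A : Op N n) : Prop :=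
  ∃ q : OpData N n, Good q ∧ Presents q A

/-- `A` is an `n`-multilinear local differential operator with vanishing characteristic. -/
def ChiZero {N n : ℕ} [NeZero n] (A : Op N n) : Prop :=
  ∃ q : OpData N n, Good q ∧ Presents q A ∧
    ∀ f, LocalTuple f → ∀ pt, realizeP (chiData q) f pt = 0

/-- Precomposition `A ∘ d/dx^i_j` with the total derivative acting on the `j`-th argument. -/
noncomputable def precompD {N n : ℕ} (A : Op N n) (i : Fin N) (j : Fin n) : Op N n :=
  fun f => A (Function.update f j (Dtot i (f j)))

/-- A horizontal form, recorded by its coefficients on the basis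
`(dx)^ε = (dx^1)^{ε^1} ∧ ⋯ ∧ (dx^N)^{ε^N}`, `ε : Fin N → Bool`. -/
abbrev Form (N : ℕ) := (Fin N → Bool) → Fn N

/-- The form-degree `|ε|`. -/
def wt {N : ℕ} (ε : Fin N → Bool) : ℕ := ∑ i, if ε i then 1 else 0

/-- The sign exponent: the number of entries of `ε` below `i` which are set. -/
def pos {N : ℕ} (i : Fin N) (ε : Fin N → Bool) : ℕ := ∑ l, if l < i ∧ ε l then 1 else 0

/-- The horizontal differential `d_H ω = Σ_i dx^i ∧ (d/dx^i) ω`. -/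
noncomputable def dH {N : ℕ} (ω : Form N) : Form N :=
  fun δ pt => ∑ i : Fin N,
    if δ i then (-1 : ℝ) ^ pos i δ * Dtot i (ω (Function.update δ i false)) pt else 0

/-- A matrix of operators acting on horizontal forms (linear case). -/
abbrev FormOp (N : ℕ) := (Fin N → Bool) → (Fin N → Bool) → (Fn N → Fn N)

/-- Application of a matrix of operators to a form. -/
noncomputable def applyFO {N : ℕ} (M : FormOp N) (ω : Form N) : Form N :=
  fun δ pt => ∑ ε : Fin N → Bool, M ε δ (ω ε) pt

/-- A degree element of `DEnd(n)`: a matrix indexed by basis multidegrees of the inputs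
`(ε_1,…,ε_n)` and of the output `δ`, with `n`-multilinear operator entries. -/
abbrev DMat (N n : ℕ) := (Fin n → (Fin N → Bool)) → (Fin N → Bool) → Op N n

/-- All matrix entries are local differential operators. -/
def LDOMat {N n : ℕ} [NeZero n] (F : DMat N n) : Prop := ∀ εs δ, IsPLDO (F εs δ)

/-- `F` represents a degree-`k` map of the regraded horizontal complexes
(`Ω_i := Ω^{N−i,0}`): the entry at `(ε⃗, δ)` vanishes unless
`N − wt δ = k + Σ_j (N − wt ε_j)`. -/
def GradedMat {N n : ℕ} (k : ℤ) (F : DMat N n) : Prop :=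
  ∀ εs δ, F εs δ ≠ 0 → (wt δ : ℤ) = (N : ℤ) - k - ∑ j, ((N : ℤ) - (wt (εs j) : ℤ))

/-- The differential `(δf)_s = d_H f_s − (−1)^k f_{s−1} d_H^{⊗n}` of the complex `DEnd_*(n)`,
written out on matrix entries. -/
noncomputable def deltaMat {N n : ℕ} (k : ℤ) (F : DMat N n) : DMat N n :=
  fun εs δ g =>
    (fun pt => ∑ i : Fin N,
      if δ i then (-1 : ℝ) ^ pos i δ * Dtot i (F εs (Function.update δ i false) g) pt else 0)
    -
    ((-1 : ℝ) ^ k) • (fun pt => ∑ j : Fin n, ∑ i : Fin N,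
      if εs j i = false then
        (-1 : ℝ) ^ ((∑ l ∈ Finset.univ.filter fun l => l < j, wt (εs l)) + pos i (εs j)) *
          F (Function.update εs j (Function.update (εs j) i true)) δ
            (Function.update g j (Dtot i (g j))) pt
      else 0)

/-- A matrix of operators vanishes (on local arguments). -/
def MatZeroLoc {N n : ℕ} (F : DMat N n) : Prop :=
  ∀ εs δ g, LocalTuple g → ∀ pt, F εs δ g pt = 0

/-- Two matrices of operators agree (on local arguments). -/
def MatEqLoc {N n : ℕ} (F G : DMat N n) : Prop :=
  ∀ εs δ g, LocalTuple g → ∀ pt, F εs δ g pt = G εs δ g pt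

/-- The projection `B_0 : DEnd_0(n) → LDO(n)`, i.e. the component `f_0` on the identifications
`[(Ω_*)^{⊗n}]_0 ≅ Loc(E)^{⊗n}`, `Ω_0 ≅ Loc(E)`. -/
def B0 {N n : ℕ} (F : DMat N n) : Op N n := F (fun _ _ => true) fun _ => true

/-- A form with coefficients in `LDO(n)`: an element of the operator complex `O^*(n)`. -/
abbrev OForm (N n : ℕ) := (Fin N → Bool) → Op N n

/-- The differential of the operator complex: `d(A (dx)^ε) = Σ_i (d/dx^i ∘ A) dx^i ∧ (dx)^ε`. -/
noncomputable def dO {N n : ℕ} (ω : OForm N n) : OForm N n :=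
  fun δ g pt => ∑ i : Fin N,
    if δ i then (-1 : ℝ) ^ pos i δ * Dtot i (ω (Function.update δ i false) g) pt else 0

/-- An element of `O^*(n)` concentrated in degree `k`. -/
def OGraded {N n : ℕ} (k : ℕ) (ω : OForm N n) : Prop := ∀ δ, ω δ ≠ 0 → wt δ = k

/-- All coefficients are local differential operators. -/
def OLDO {N n : ℕ} [NeZero n] (ω : OForm N n) : Prop := ∀ δ, IsPLDO (ω δ)

/-- An element of `O^*(n)` vanishes on local arguments. -/
def OZeroLoc {N n : ℕ} (ω : OForm N n) : Prop :=
  ∀ δ g, LocalTuple g → ∀ pt, ω δ g pt = 0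

/-- Two elements of `O^*(n)` agree on local arguments. -/
def OEqLoc {N n : ℕ} (ω η : OForm N n) : Prop :=
  ∀ δ g, LocalTuple g → ∀ pt, ω δ g pt = η δ g pt

/-- The Euler operator `E(L dx^1∧⋯∧dx^N) = Σ_I (−1)^{|I|} (d/dx)^I (∂L/∂u_I)`. -/
noncomputable def Euler {N : ℕ} (L : Fn N) : Fn N :=
  fun pt => ∑' I : MI N, (-1 : ℝ) ^ (∑ i, I i) * DPow I (pderivU I L) pt

end JetBundle
namespace JetBundle


/-! ### Auxiliary development -/

variable {N : ℕ}

/-- Restriction of a jet point to a finite set of jet coordinates. -/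
def res (S : Finset (MI N)) (p : JetPt N) : (Fin N → ℝ) × (↥S → ℝ) :=
  (p.1, fun J => p.2 J.1)

/-- `f` is a smooth function of `x` and the jet coordinates in `S`. -/
def IsLocalOn (S : Finset (MI N)) (f : Fn N) : Prop :=
  ∃ g : ((Fin N → ℝ) × (↥S → ℝ)) → ℝ, ContDiff ℝ (⊤ : ℕ∞) g ∧ ∀ p, f p = g (res S p)

lemma isLocal_iff {f : Fn N} : IsLocal f ↔ ∃ S, IsLocalOn S f := Iff.rfl

def vX (S : Finset (MI N)) (i : Fin N) : (Fin N → ℝ) × (↥S → ℝ) := (Pi.single i 1, 0)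

def vU (S : Finset (MI N)) (J : ↥S) : (Fin N → ℝ) × (↥S → ℝ) := (0, Pi.single J 1)

lemma res_updX (S : Finset (MI N)) (p : JetPt N) (i : Fin N) (t : ℝ) :
    res S (Function.update p.1 i t, p.2) = res S p + (t - p.1 i) • vX S i := by
  have h1 : Function.update p.1 i t = p.1 + (t - p.1 i) • (Pi.single i (1:ℝ) : Fin N → ℝ) := by
    funext j
    by_cases h : j = i
    · subst h; simp
    · simp [Function.update_of_ne h, Pi.single_apply, h]
  refine Prod.ext ?_ ?_
  · simpa [res, vX] using h1
  · simp [res, vX]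

lemma res_updU (S : Finset (MI N)) (p : JetPt N) {J : MI N} (hJ : J ∈ S) (t : ℝ) :
    res S (p.1, Function.update p.2 J t) = res S p + (t - p.2 J) • vU S ⟨J, hJ⟩ := by
  have h2 : (fun K : ↥S => Function.update p.2 J t K.1)
      = (fun K : ↥S => p.2 K.1) + (t - p.2 J) • (Pi.single (⟨J, hJ⟩ : ↥S) (1:ℝ) : ↥S → ℝ) := by
    funext K
    by_cases h : K = ⟨J, hJ⟩
    · subst h; simp
    · have h' : K.1 ≠ J := fun hh => h (Subtype.ext hh)
      simp [Function.update_of_ne h', Pi.single_apply, h]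
  refine Prod.ext ?_ ?_
  · simp [res, vU]
  · simpa [res, vU] using h2

lemma res_upd_not (S : Finset (MI N)) (p : JetPt N) {J : MI N} (hJ : J ∉ S) (t : ℝ) :
    res S (p.1, Function.update p.2 J t) = res S p := by
  refine Prod.ext rfl ?_
  funext K
  have h' : K.1 ≠ J := fun hh => hJ (hh ▸ K.2)
  simp [res, Function.update_of_ne h']

lemma hasDerivAt_affine {E : Type*} [NormedAddCommGroup E] [NormedSpace ℝ E]
    {g : E → ℝ} (hg : Differentiable ℝ g) (x v : E) (t0 : ℝ) :
    HasDerivAt (fun t => g (x + (t - t0) • v)) (fderiv ℝ g x v) t0 := by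
  have h1 : HasDerivAt (fun t : ℝ => x + (t - t0) • v) v t0 := by
    simpa using (((hasDerivAt_id t0).sub_const t0).smul_const v).const_add x
  have hx : x + ((t0 : ℝ) - t0) • v = x := by simp
  have h2 : HasFDerivAt g (fderiv ℝ g x) (x + ((t0:ℝ) - t0) • v) := by
    rw [hx]; exact (hg x).hasFDerivAt
  exact h2.comp_hasDerivAt t0 h1

section Rep

variable {S : Finset (MI N)} {g : ((Fin N → ℝ) × (↥S → ℝ)) → ℝ} {f : Fn N}

lemma hasDerivAt_sliceX_rep (hg : ContDiff ℝ (⊤ : ℕ∞) g) (hfg : ∀ p, f p = g (res S p))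
    (i : Fin N) (p : JetPt N) :
    HasDerivAt (fun t => f (Function.update p.1 i t, p.2))
      (fderiv ℝ g (res S p) (vX S i)) (p.1 i) := by
  have he : (fun t => f (Function.update p.1 i t, p.2))
      = fun t => g (res S p + (t - p.1 i) • vX S i) := by
    funext t; rw [hfg, res_updX]
  rw [he]
  exact hasDerivAt_affine (hg.differentiable (by simp)) _ _ _

lemma pderivX_rep (hg : ContDiff ℝ (⊤ : ℕ∞) g) (hfg : ∀ p, f p = g (res S p))
    (i : Fin N) (p : JetPt N) :
    pderivX i f p = fderiv ℝ g (res S p) (vX S i) :=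
  (hasDerivAt_sliceX_rep hg hfg i p).deriv

lemma hasDerivAt_sliceU_rep (hg : ContDiff ℝ (⊤ : ℕ∞) g) (hfg : ∀ p, f p = g (res S p))
    {J : MI N} (hJ : J ∈ S) (p : JetPt N) :
    HasDerivAt (fun t => f (p.1, Function.update p.2 J t))
      (fderiv ℝ g (res S p) (vU S ⟨J, hJ⟩)) (p.2 J) := by
  have he : (fun t => f (p.1, Function.update p.2 J t))
      = fun t => g (res S p + (t - p.2 J) • vU S ⟨J, hJ⟩) := by
    funext t; rw [hfg, res_updU S p hJ]
  rw [he]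
  exact hasDerivAt_affine (hg.differentiable (by simp)) _ _ _

lemma pderivU_rep (hg : ContDiff ℝ (⊤ : ℕ∞) g) (hfg : ∀ p, f p = g (res S p))
    {J : MI N} (hJ : J ∈ S) (p : JetPt N) :
    pderivU J f p = fderiv ℝ g (res S p) (vU S ⟨J, hJ⟩) :=
  (hasDerivAt_sliceU_rep hg hfg hJ p).deriv

lemma pderivU_not_mem (hfg : ∀ p, f p = g (res S p)) {J : MI N} (hJ : J ∉ S) :
    pderivU J f = 0 := by
  funext p
  have he : (fun t => f (p.1, Function.update p.2 J t)) = fun _ => g (res S p) := by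
    funext t; rw [hfg, res_upd_not S p hJ]
  show deriv (fun t => f (p.1, Function.update p.2 J t)) (p.2 J) = 0
  rw [he, deriv_const]

end Rep

lemma contDiff_fderiv_apply {E : Type*} [NormedAddCommGroup E] [NormedSpace ℝ E]
    {g : E → ℝ} (hg : ContDiff ℝ (⊤ : ℕ∞) g) (v : E) :
    ContDiff ℝ (⊤ : ℕ∞) (fun z => fderiv ℝ g z v) :=
  (hg.fderiv_right (by simp)).clm_apply contDiff_const

lemma fderiv_swap {E : Type*} [NormedAddCommGroup E] [NormedSpace ℝ E]
    {g : E → ℝ} (hg : ContDiff ℝ (⊤ : ℕ∞) g) (x v w : E) :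
    fderiv ℝ (fun z => fderiv ℝ g z v) x w = fderiv ℝ (fun z => fderiv ℝ g z w) x v := by
  have hd : Differentiable ℝ g := hg.differentiable (by simp)
  have h1 : ContDiff ℝ (⊤ : ℕ∞) (fderiv ℝ g) := hg.fderiv_right (by simp)
  have h2 : HasFDerivAt (fderiv ℝ g) (fderiv ℝ (fderiv ℝ g) x) x :=
    ((h1.differentiable (by simp)) x).hasFDerivAt
  have key : ∀ u : E, fderiv ℝ (fun z => fderiv ℝ g z u) x
      = (ContinuousLinearMap.apply ℝ ℝ u).comp (fderiv ℝ (fderiv ℝ g) x) := by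
    intro u
    exact ((ContinuousLinearMap.apply ℝ ℝ u).hasFDerivAt.comp x h2).fderiv
  have hsym := second_derivative_symmetric (fun y => (hd y).hasFDerivAt) h2 w v
  rw [key v, key w]
  simpa using hsym


/-! ### Zero lemmas -/

lemma pderivX_zero (i : Fin N) : pderivX i (0 : Fn N) = 0 := by
  funext p
  show deriv (fun _ => (0:ℝ)) (p.1 i) = 0
  rw [deriv_const]

lemma pderivU_zero (J : MI N) : pderivU J (0 : Fn N) = 0 := by
  funext p
  show deriv (fun _ => (0:ℝ)) (p.2 J) = 0
  rw [deriv_const]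

lemma Dtot_zero (i : Fin N) : Dtot i (0 : Fn N) = 0 := by
  funext p
  show pderivX i (0:Fn N) p + ∑' J : MI N, p.2 (inc i J) * pderivU J (0:Fn N) p = 0
  simp [pderivX_zero, pderivU_zero]

lemma DPow_zero (K : MI N) : DPow K (0 : Fn N) = 0 := by
  show (List.finRange N).foldr (fun i g => (Dtot i)^[K i] ∘ g) id (0:Fn N) = 0
  induction (List.finRange N) with
  | nil => rfl
  | cons a l ih =>
      show (Dtot a)^[K a] (l.foldr (fun i g => (Dtot i)^[K i] ∘ g) id (0:Fn N)) = 0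
      rw [ih]
      clear ih
      induction (K a) with
      | zero => rfl
      | succ m ihm => rw [Function.iterate_succ_apply, Dtot_zero, ihm]

lemma pderivU_iterate_zero (J : MI N) (m : ℕ) : (pderivU J)^[m] (0 : Fn N) = 0 := by
  induction m with
  | zero => rfl
  | succ m ihm => rw [Function.iterate_succ_apply, pderivU_zero, ihm]

/-! ### Locality closure -/

lemma IsLocalOn.mono {S T : Finset (MI N)} {f : Fn N} (h : IsLocalOn S f) (hST : S ⊆ T) :
    IsLocalOn T f := by
  obtain ⟨g, hg, hfg⟩ := h
  refine ⟨fun z => g (z.1, fun J : ↥S => z.2 ⟨J.1, hST J.2⟩), ?_, ?_⟩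
  · refine hg.comp (ContDiff.prodMk ?_ ?_)
    · exact contDiff_fst
    · exact contDiff_pi.mpr fun J =>
        contDiff_pi.mp contDiff_snd (⟨J.1, hST J.2⟩ : ↥T)
  · intro p; rw [hfg]; rfl

lemma IsLocalOn.zero (S : Finset (MI N)) : IsLocalOn S (0 : Fn N) :=
  ⟨fun _ => 0, contDiff_const, fun _ => rfl⟩

lemma IsLocalOn.add {S : Finset (MI N)} {f₁ f₂ : Fn N} (h₁ : IsLocalOn S f₁)
    (h₂ : IsLocalOn S f₂) : IsLocalOn S (f₁ + f₂) := by
  obtain ⟨g₁, hg₁, hfg₁⟩ := h₁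
  obtain ⟨g₂, hg₂, hfg₂⟩ := h₂
  exact ⟨fun z => g₁ z + g₂ z, hg₁.add hg₂, fun p => by
    show f₁ p + f₂ p = _; rw [hfg₁, hfg₂]⟩

lemma IsLocalOn.mul {S : Finset (MI N)} {f₁ f₂ : Fn N} (h₁ : IsLocalOn S f₁)
    (h₂ : IsLocalOn S f₂) : IsLocalOn S (f₁ * f₂) := by
  obtain ⟨g₁, hg₁, hfg₁⟩ := h₁
  obtain ⟨g₂, hg₂, hfg₂⟩ := h₂
  exact ⟨fun z => g₁ z * g₂ z, hg₁.mul hg₂, fun p => by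
    show f₁ p * f₂ p = _; rw [hfg₁, hfg₂]⟩

lemma IsLocal.add {f₁ f₂ : Fn N} (h₁ : IsLocal f₁) (h₂ : IsLocal f₂) : IsLocal (f₁ + f₂) := by
  obtain ⟨S, hS⟩ := isLocal_iff.mp h₁
  obtain ⟨T, hT⟩ := isLocal_iff.mp h₂
  exact isLocal_iff.mpr ⟨S ∪ T, (hS.mono Finset.subset_union_left).add
    (hT.mono Finset.subset_union_right)⟩

lemma IsLocal.mul {f₁ f₂ : Fn N} (h₁ : IsLocal f₁) (h₂ : IsLocal f₂) : IsLocal (f₁ * f₂) := by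
  obtain ⟨S, hS⟩ := isLocal_iff.mp h₁
  obtain ⟨T, hT⟩ := isLocal_iff.mp h₂
  exact isLocal_iff.mpr ⟨S ∪ T, (hS.mono Finset.subset_union_left).mul
    (hT.mono Finset.subset_union_right)⟩

lemma isLocal_zero : IsLocal (0 : Fn N) := isLocal_iff.mpr ⟨∅, IsLocalOn.zero ∅⟩

lemma isLocal_sum {ι : Type*} (s : Finset ι) (F : ι → Fn N) (h : ∀ x ∈ s, IsLocal (F x)) :
    IsLocal (∑ x ∈ s, F x) := by
  classical
  induction s using Finset.induction with
  | empty => simpa using isLocal_zero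
  | insert _ _ hx ih =>
      rw [Finset.sum_insert hx]
      exact (h _ (Finset.mem_insert_self _ _)).add
        (ih fun x hxs => h x (Finset.mem_insert_of_mem hxs))

lemma isLocal_prod {ι : Type*} (s : Finset ι) (F : ι → Fn N) (h : ∀ x ∈ s, IsLocal (F x)) :
    IsLocal (∏ x ∈ s, F x) := by
  classical
  induction s using Finset.induction with
  | empty =>
      refine isLocal_iff.mpr ⟨∅, ⟨fun _ => 1, contDiff_const, fun p => ?_⟩⟩
      simp
  | insert _ _ hx ih =>
      rw [Finset.prod_insert hx]
      exact (h _ (Finset.mem_insert_self _ _)).mul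
        (ih fun x hxs => h x (Finset.mem_insert_of_mem hxs))

lemma isLocalOn_pderivX {S : Finset (MI N)} {f : Fn N} (h : IsLocalOn S f) (i : Fin N) :
    IsLocalOn S (pderivX i f) := by
  obtain ⟨g, hg, hfg⟩ := h
  exact ⟨fun z => fderiv ℝ g z (vX S i), contDiff_fderiv_apply hg _,
    fun p => pderivX_rep hg hfg i p⟩

lemma isLocalOn_pderivU {S : Finset (MI N)} {f : Fn N} (h : IsLocalOn S f) (J : MI N) :
    IsLocalOn S (pderivU J f) := by
  obtain ⟨g, hg, hfg⟩ := h
  by_cases hJ : J ∈ S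
  · exact ⟨fun z => fderiv ℝ g z (vU S ⟨J, hJ⟩), contDiff_fderiv_apply hg _,
      fun p => pderivU_rep hg hfg hJ p⟩
  · rw [pderivU_not_mem hfg hJ]; exact IsLocalOn.zero S

lemma pderivU_eq_zero_of_not_mem {S : Finset (MI N)} {f : Fn N} (h : IsLocalOn S f)
    {J : MI N} (hJ : J ∉ S) : pderivU J f = 0 := by
  obtain ⟨g, hg, hfg⟩ := h
  exact pderivU_not_mem hfg hJ

lemma isLocal_pderivX {f : Fn N} (h : IsLocal f) (i : Fin N) : IsLocal (pderivX i f) := by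
  obtain ⟨S, hS⟩ := isLocal_iff.mp h
  exact isLocal_iff.mpr ⟨S, isLocalOn_pderivX hS i⟩

lemma isLocal_pderivU {f : Fn N} (h : IsLocal f) (J : MI N) : IsLocal (pderivU J f) := by
  obtain ⟨S, hS⟩ := isLocal_iff.mp h
  exact isLocal_iff.mpr ⟨S, isLocalOn_pderivU hS J⟩

/-! ### Coordinate functions -/

def coordFn (K : MI N) : Fn N := fun p => p.2 K

lemma isLocalOn_coordFn (K : MI N) : IsLocalOn {K} (coordFn K) :=
  ⟨fun z => z.2 ⟨K, Finset.mem_singleton_self K⟩,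
    contDiff_pi.mp contDiff_snd (⟨K, Finset.mem_singleton_self K⟩ : ↥({K} : Finset (MI N))), fun _ => rfl⟩

lemma isLocal_coordFn (K : MI N) : IsLocal (coordFn K) :=
  isLocal_iff.mpr ⟨{K}, isLocalOn_coordFn K⟩

lemma pderivX_coordFn (i : Fin N) (K : MI N) : pderivX i (coordFn K) = 0 := by
  funext p
  show deriv (fun _ => p.2 K) (p.1 i) = 0
  rw [deriv_const]

lemma pderivU_coordFn (J K : MI N) (p : JetPt N) :
    pderivU J (coordFn K) p = if J = K then 1 else 0 := by
  by_cases h : J = K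
  · subst h
    show deriv (fun t => Function.update p.2 J t J) (p.2 J) = _
    simp [Function.update_self]
  · show deriv (fun t => Function.update p.2 J t K) (p.2 J) = _
    have : (fun t => Function.update p.2 J t K) = fun _ => p.2 K := by
      funext t; rw [Function.update_of_ne (Ne.symm h)]
    rw [this, deriv_const, if_neg h]

lemma Dtot_coordFn (i : Fin N) (K : MI N) : Dtot i (coordFn K) = coordFn (inc i K) := by
  funext p
  show pderivX i (coordFn K) p + ∑' J : MI N, p.2 (inc i J) * pderivU J (coordFn K) p = p.2 (inc i K)
  rw [pderivX_coordFn]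
  have h1 : (fun J : MI N => p.2 (inc i J) * pderivU J (coordFn K) p)
      = fun J => if J = K then p.2 (inc i K) else 0 := by
    funext J
    rw [pderivU_coordFn]
    by_cases h : J = K
    · subst h; simp
    · simp [h]
  rw [h1, tsum_ite_eq]
  simp


/-! ### Slice derivatives for local functions -/

lemma hasDerivAt_sliceX {f : Fn N} (hf : IsLocal f) (i : Fin N) (p : JetPt N) :
    HasDerivAt (fun t => f (Function.update p.1 i t, p.2)) (pderivX i f p) (p.1 i) := by
  obtain ⟨S, g, hg, hfg⟩ := hf
  have h := hasDerivAt_sliceX_rep hg hfg i p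
  rwa [← pderivX_rep hg hfg i p] at h

lemma hasDerivAt_sliceU {f : Fn N} (hf : IsLocal f) (J : MI N) (p : JetPt N) :
    HasDerivAt (fun t => f (p.1, Function.update p.2 J t)) (pderivU J f p) (p.2 J) := by
  obtain ⟨S, g, hg, hfg⟩ := hf
  by_cases hJ : J ∈ S
  · have h := hasDerivAt_sliceU_rep hg hfg hJ p
    rwa [← pderivU_rep hg hfg hJ p] at h
  · have h0 : pderivU J f = 0 := pderivU_not_mem hfg hJ
    have he : (fun t => f (p.1, Function.update p.2 J t)) = fun _ => g (res S p) := by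
      funext t; rw [hfg]; exact congrArg g (res_upd_not S p hJ t)
    rw [h0, he]
    simpa using hasDerivAt_const (p.2 J) (g (res S p))

/-! ### Additivity and Leibniz for partial derivatives on local functions -/

lemma pderivX_add {f₁ f₂ : Fn N} (h₁ : IsLocal f₁) (h₂ : IsLocal f₂) (i : Fin N) :
    pderivX i (f₁ + f₂) = pderivX i f₁ + pderivX i f₂ := by
  funext p
  have h := (hasDerivAt_sliceX h₁ i p).add (hasDerivAt_sliceX h₂ i p)
  have he : (fun t => f₁ (Function.update p.1 i t, p.2) + f₂ (Function.update p.1 i t, p.2))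
      = fun t => (f₁ + f₂) (Function.update p.1 i t, p.2) := rfl
  replace h : HasDerivAt (fun t => (f₁ + f₂) (Function.update p.1 i t, p.2)) _ (p.1 i) := h
  exact h.deriv

lemma pderivU_add {f₁ f₂ : Fn N} (h₁ : IsLocal f₁) (h₂ : IsLocal f₂) (J : MI N) :
    pderivU J (f₁ + f₂) = pderivU J f₁ + pderivU J f₂ := by
  funext p
  have h := (hasDerivAt_sliceU h₁ J p).add (hasDerivAt_sliceU h₂ J p)
  have he : (fun t => f₁ (p.1, Function.update p.2 J t) + f₂ (p.1, Function.update p.2 J t))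
      = fun t => (f₁ + f₂) (p.1, Function.update p.2 J t) := rfl
  replace h : HasDerivAt (fun t => (f₁ + f₂) (p.1, Function.update p.2 J t)) _ (p.2 J) := h
  exact h.deriv

lemma pderivX_mul {f₁ f₂ : Fn N} (h₁ : IsLocal f₁) (h₂ : IsLocal f₂) (i : Fin N) (p : JetPt N) :
    pderivX i (f₁ * f₂) p = pderivX i f₁ p * f₂ p + f₁ p * pderivX i f₂ p := by
  have h := (hasDerivAt_sliceX h₁ i p).mul (hasDerivAt_sliceX h₂ i p)
  have he : (fun t => f₁ (Function.update p.1 i t, p.2) * f₂ (Function.update p.1 i t, p.2))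
      = fun t => (f₁ * f₂) (Function.update p.1 i t, p.2) := rfl
  replace h : HasDerivAt (fun t => (f₁ * f₂) (Function.update p.1 i t, p.2)) _ (p.1 i) := h
  have hv : (Function.update p.1 i (p.1 i), p.2) = p := by
    rw [Function.update_eq_self]
  rw [hv] at h
  exact h.deriv

lemma pderivU_mul {f₁ f₂ : Fn N} (h₁ : IsLocal f₁) (h₂ : IsLocal f₂) (J : MI N) (p : JetPt N) :
    pderivU J (f₁ * f₂) p = pderivU J f₁ p * f₂ p + f₁ p * pderivU J f₂ p := by
  have h := (hasDerivAt_sliceU h₁ J p).mul (hasDerivAt_sliceU h₂ J p)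
  have he : (fun t => f₁ (p.1, Function.update p.2 J t) * f₂ (p.1, Function.update p.2 J t))
      = fun t => (f₁ * f₂) (p.1, Function.update p.2 J t) := rfl
  replace h : HasDerivAt (fun t => (f₁ * f₂) (p.1, Function.update p.2 J t)) _ (p.2 J) := h
  have hv : ((p.1, Function.update p.2 J (p.2 J)) : JetPt N) = p := by
    rw [Function.update_eq_self]
  rw [hv] at h
  exact h.deriv

/-! ### The total derivative as a finite sum -/

lemma Dtot_eq_sum {S : Finset (MI N)} {f : Fn N} (h : IsLocalOn S f) (i : Fin N) (p : JetPt N) :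
    Dtot i f p = pderivX i f p + ∑ J ∈ S, p.2 (inc i J) * pderivU J f p := by
  show pderivX i f p + ∑' J : MI N, p.2 (inc i J) * pderivU J f p = _
  congr 1
  refine tsum_eq_sum fun J hJ => ?_
  rw [pderivU_eq_zero_of_not_mem h hJ]
  simp

lemma Dtot_eq_fun {S : Finset (MI N)} {f : Fn N} (h : IsLocalOn S f) (i : Fin N) :
    Dtot i f = pderivX i f + ∑ J ∈ S, coordFn (inc i J) * pderivU J f := by
  funext p
  rw [Dtot_eq_sum h i p]
  simp [coordFn, Finset.sum_apply]

lemma isLocal_Dtot {f : Fn N} (h : IsLocal f) (i : Fin N) : IsLocal (Dtot i f) := by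
  obtain ⟨S, hS⟩ := isLocal_iff.mp h
  rw [Dtot_eq_fun hS i]
  refine (isLocal_pderivX h i).add (isLocal_sum _ _ fun J _ => ?_)
  exact (isLocal_coordFn _).mul (isLocal_pderivU h J)

lemma Dtot_add {f₁ f₂ : Fn N} (h₁ : IsLocal f₁) (h₂ : IsLocal f₂) (i : Fin N) :
    Dtot i (f₁ + f₂) = Dtot i f₁ + Dtot i f₂ := by
  obtain ⟨S, hS⟩ := isLocal_iff.mp h₁
  obtain ⟨T, hT⟩ := isLocal_iff.mp h₂
  have hS' : IsLocalOn (S ∪ T) f₁ := hS.mono Finset.subset_union_left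
  have hT' : IsLocalOn (S ∪ T) f₂ := hT.mono Finset.subset_union_right
  funext p
  rw [Pi.add_apply, Dtot_eq_sum (hS'.add hT') i p, Dtot_eq_sum hS' i p, Dtot_eq_sum hT' i p,
    pderivX_add h₁ h₂ i]
  have : ∀ J ∈ S ∪ T, p.2 (inc i J) * pderivU J (f₁ + f₂) p
      = p.2 (inc i J) * pderivU J f₁ p + p.2 (inc i J) * pderivU J f₂ p := by
    intro J _
    rw [pderivU_add h₁ h₂ J]
    simp [mul_add]
  rw [Finset.sum_congr rfl this, Finset.sum_add_distrib]
  simp only [Pi.add_apply]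
  ring

lemma Dtot_mul {f₁ f₂ : Fn N} (h₁ : IsLocal f₁) (h₂ : IsLocal f₂) (i : Fin N) :
    Dtot i (f₁ * f₂) = Dtot i f₁ * f₂ + f₁ * Dtot i f₂ := by
  obtain ⟨S, hS⟩ := isLocal_iff.mp h₁
  obtain ⟨T, hT⟩ := isLocal_iff.mp h₂
  have hS' : IsLocalOn (S ∪ T) f₁ := hS.mono Finset.subset_union_left
  have hT' : IsLocalOn (S ∪ T) f₂ := hT.mono Finset.subset_union_right
  funext p
  rw [Pi.add_apply, Pi.mul_apply, Pi.mul_apply, Dtot_eq_sum (hS'.mul hT') i p,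
    Dtot_eq_sum hS' i p, Dtot_eq_sum hT' i p, pderivX_mul h₁ h₂ i p]
  have : ∀ J ∈ S ∪ T, p.2 (inc i J) * pderivU J (f₁ * f₂) p
      = p.2 (inc i J) * pderivU J f₁ p * f₂ p + f₁ p * (p.2 (inc i J) * pderivU J f₂ p) := by
    intro J _
    rw [pderivU_mul h₁ h₂ J p]
    ring
  rw [Finset.sum_congr rfl this, Finset.sum_add_distrib, ← Finset.sum_mul, ← Finset.mul_sum]
  ring

lemma Dtot_finset_sum {ι : Type*} (s : Finset ι) (F : ι → Fn N)
    (h : ∀ x ∈ s, IsLocal (F x)) (i : Fin N) :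
    Dtot i (∑ x ∈ s, F x) = ∑ x ∈ s, Dtot i (F x) := by
  classical
  induction s using Finset.induction with
  | empty => simpa using Dtot_zero i
  | insert _ _ hx ih =>
      rw [Finset.sum_insert hx, Finset.sum_insert hx,
        Dtot_add (h _ (Finset.mem_insert_self _ _))
          (isLocal_sum _ _ fun x hxs => h x (Finset.mem_insert_of_mem hxs)) i,
        ih fun x hxs => h x (Finset.mem_insert_of_mem hxs)]


/-! ### Commutation of partial derivatives on local functions -/

lemma pderivX_comm {f : Fn N} (hf : IsLocal f) (a b : Fin N) :
    pderivX a (pderivX b f) = pderivX b (pderivX a f) := by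
  obtain ⟨S, g, hg, hfg⟩ := hf
  funext p
  have hb : ∀ p, pderivX b f p = (fun z => fderiv ℝ g z (vX S b)) (res S p) :=
    fun p => pderivX_rep hg hfg b p
  have ha : ∀ p, pderivX a f p = (fun z => fderiv ℝ g z (vX S a)) (res S p) :=
    fun p => pderivX_rep hg hfg a p
  rw [pderivX_rep (contDiff_fderiv_apply hg _) hb a p,
      pderivX_rep (contDiff_fderiv_apply hg _) ha b p]
  exact fderiv_swap hg (res S p) (vX S b) (vX S a)

lemma pderivX_pderivU_comm {f : Fn N} (hf : IsLocal f) (a : Fin N) (J : MI N) :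
    pderivX a (pderivU J f) = pderivU J (pderivX a f) := by
  obtain ⟨S, g, hg, hfg⟩ := hf
  have hfg' : ∀ p, f p = g (res S p) := hfg
  by_cases hJ : J ∈ S
  · funext p
    have hU : ∀ p, pderivU J f p = (fun z => fderiv ℝ g z (vU S ⟨J, hJ⟩)) (res S p) :=
      fun p => pderivU_rep hg hfg' hJ p
    have hXa : ∀ p, pderivX a f p = (fun z => fderiv ℝ g z (vX S a)) (res S p) :=
      fun p => pderivX_rep hg hfg' a p
    rw [pderivX_rep (contDiff_fderiv_apply hg _) hU a p,
        pderivU_rep (contDiff_fderiv_apply hg _) hXa hJ p]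
    exact fderiv_swap hg (res S p) (vU S ⟨J, hJ⟩) (vX S a)
  · rw [pderivU_not_mem hfg' hJ, pderivX_zero,
      pderivU_eq_zero_of_not_mem (isLocalOn_pderivX ⟨g, hg, hfg'⟩ a) hJ]

lemma pderivU_pderivU_comm {f : Fn N} (hf : IsLocal f) (J K : MI N) :
    pderivU J (pderivU K f) = pderivU K (pderivU J f) := by
  obtain ⟨S, g, hg, hfg⟩ := hf
  have hfg' : ∀ p, f p = g (res S p) := hfg
  by_cases hJ : J ∈ S
  · by_cases hK : K ∈ S
    · funext p
      have hUK : ∀ p, pderivU K f p = (fun z => fderiv ℝ g z (vU S ⟨K, hK⟩)) (res S p) :=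
        fun p => pderivU_rep hg hfg' hK p
      have hUJ : ∀ p, pderivU J f p = (fun z => fderiv ℝ g z (vU S ⟨J, hJ⟩)) (res S p) :=
        fun p => pderivU_rep hg hfg' hJ p
      rw [pderivU_rep (contDiff_fderiv_apply hg _) hUK hJ p,
          pderivU_rep (contDiff_fderiv_apply hg _) hUJ hK p]
      exact fderiv_swap hg (res S p) (vU S ⟨K, hK⟩) (vU S ⟨J, hJ⟩)
    · rw [pderivU_eq_zero_of_not_mem ⟨g, hg, hfg'⟩ hK, pderivU_zero,
        pderivU_eq_zero_of_not_mem (isLocalOn_pderivU ⟨g, hg, hfg'⟩ J) hK]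
  · rw [pderivU_eq_zero_of_not_mem ⟨g, hg, hfg'⟩ hJ, pderivU_zero,
      pderivU_eq_zero_of_not_mem (isLocalOn_pderivU ⟨g, hg, hfg'⟩ K) hJ]

lemma inc_comm (a b : Fin N) (J : MI N) : inc a (inc b J) = inc b (inc a J) := by
  by_cases hab : a = b
  · subst hab; rfl
  · funext l
    simp only [inc, Function.update_apply]
    by_cases hla : l = a <;> by_cases hlb : l = b
    · exact absurd (hla ▸ hlb) hab
    · simp [hla, hlb, hab, Ne.symm hab]
    · simp [hla, hlb, hab, Ne.symm hab]
    · simp [hla, hlb]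

/-! ### Commutation of total derivatives -/

lemma Dtot_comm {f : Fn N} (hf : IsLocal f) (a b : Fin N) :
    Dtot a (Dtot b f) = Dtot b (Dtot a f) := by
  obtain ⟨S, hS⟩ := isLocal_iff.mp hf
  have key : ∀ (a b : Fin N) (p : JetPt N), Dtot a (Dtot b f) p
      = pderivX a (pderivX b f) p
      + (∑ J ∈ S, p.2 (inc a J) * pderivU J (pderivX b f) p)
      + (∑ J ∈ S, p.2 (inc a (inc b J)) * pderivU J f p)
      + (∑ J ∈ S, p.2 (inc b J) * pderivX a (pderivU J f) p)
      + (∑ J ∈ S, ∑ K ∈ S, p.2 (inc b J) * (p.2 (inc a K) * pderivU K (pderivU J f) p)) := by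
    intro a b p
    have hpb : IsLocal (pderivX b f) := isLocal_pderivX hf b
    have hU : ∀ J : MI N, IsLocal (pderivU J f) := fun J => isLocal_pderivU hf J
    have hcU : ∀ J : MI N, IsLocal (coordFn (inc b J) * pderivU J f) :=
      fun J => (isLocal_coordFn _).mul (hU J)
    rw [Dtot_eq_fun hS b, Dtot_add hpb (isLocal_sum _ _ fun J _ => hcU J) a, Pi.add_apply,
      Dtot_finset_sum _ _ (fun J _ => hcU J) a, Finset.sum_apply]
    have h1 : Dtot a (pderivX b f) p = pderivX a (pderivX b f) p
        + ∑ J ∈ S, p.2 (inc a J) * pderivU J (pderivX b f) p :=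
      Dtot_eq_sum (isLocalOn_pderivX hS b) a p
    have h2 : ∀ J ∈ S, (Dtot a (coordFn (inc b J) * pderivU J f)) p
        = p.2 (inc a (inc b J)) * pderivU J f p
          + p.2 (inc b J) * (pderivX a (pderivU J f) p
              + ∑ K ∈ S, p.2 (inc a K) * pderivU K (pderivU J f) p) := by
      intro J _
      rw [Dtot_mul (isLocal_coordFn _) (hU J) a, Pi.add_apply, Pi.mul_apply, Pi.mul_apply,
        Dtot_coordFn a (inc b J)]
      rw [← Dtot_eq_sum (isLocalOn_pderivU hS J) a p]
      rfl
    rw [h1, Finset.sum_congr rfl h2]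
    rw [Finset.sum_add_distrib]
    have h3 : ∑ J ∈ S, p.2 (inc b J) * (pderivX a (pderivU J f) p
        + ∑ K ∈ S, p.2 (inc a K) * pderivU K (pderivU J f) p)
        = (∑ J ∈ S, p.2 (inc b J) * pderivX a (pderivU J f) p)
          + ∑ J ∈ S, ∑ K ∈ S, p.2 (inc b J) * (p.2 (inc a K) * pderivU K (pderivU J f) p) := by
      rw [← Finset.sum_add_distrib]
      refine Finset.sum_congr rfl fun J _ => ?_
      rw [mul_add, Finset.mul_sum]
    rw [h3]
    ring
  funext p
  rw [key a b p, key b a p]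
  have e1 : pderivX a (pderivX b f) = pderivX b (pderivX a f) := pderivX_comm hf a b
  have e2 : ∀ J : MI N, pderivU J (pderivX b f) = pderivX b (pderivU J f) :=
    fun J => (pderivX_pderivU_comm hf b J).symm
  have e2' : ∀ J : MI N, pderivU J (pderivX a f) = pderivX a (pderivU J f) :=
    fun J => (pderivX_pderivU_comm hf a J).symm
  have e5 : ∑ J ∈ S, ∑ K ∈ S, p.2 (inc a J) * (p.2 (inc b K) * pderivU K (pderivU J f) p)
      = ∑ J ∈ S, ∑ K ∈ S, p.2 (inc b J) * (p.2 (inc a K) * pderivU K (pderivU J f) p) := by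
    rw [Finset.sum_comm]
    refine Finset.sum_congr rfl fun J _ => Finset.sum_congr rfl fun K _ => ?_
    rw [pderivU_pderivU_comm hf J K]
    ring
  simp only [e1, e2, e2', inc_comm a b]
  rw [e5]
  ring

/-! ### Iterates of total derivatives -/

lemma isLocal_Dtot_iterate {f : Fn N} (hf : IsLocal f) (a : Fin N) (m : ℕ) :
    IsLocal ((Dtot a)^[m] f) := by
  induction m with
  | zero => exact hf
  | succ m ih => rw [Function.iterate_succ_apply']; exact isLocal_Dtot ih a

lemma Dtot_iterate_comm {f : Fn N} (hf : IsLocal f) (a b : Fin N) (m : ℕ) :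
    Dtot a ((Dtot b)^[m] f) = (Dtot b)^[m] (Dtot a f) := by
  induction m with
  | zero => rfl
  | succ m ih =>
      rw [Function.iterate_succ_apply', Function.iterate_succ_apply',
        Dtot_comm (isLocal_Dtot_iterate hf b m) a b, ih]

lemma Dtot_iterate_add {f₁ f₂ : Fn N} (h₁ : IsLocal f₁) (h₂ : IsLocal f₂) (a : Fin N) (m : ℕ) :
    (Dtot a)^[m] (f₁ + f₂) = (Dtot a)^[m] f₁ + (Dtot a)^[m] f₂ := by
  induction m with
  | zero => rfl
  | succ m ih =>
      rw [Function.iterate_succ_apply', Function.iterate_succ_apply',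
        Function.iterate_succ_apply', ih,
        Dtot_add (isLocal_Dtot_iterate h₁ a m) (isLocal_Dtot_iterate h₂ a m) a]

lemma Dtot_iterate_zero (a : Fin N) (m : ℕ) : (Dtot a)^[m] (0 : Fn N) = 0 := by
  induction m with
  | zero => rfl
  | succ m ih => rw [Function.iterate_succ_apply, Dtot_zero, ih]


/-! ### Iterated total derivatives along a list -/

noncomputable def DLl (K : MI N) (l : List (Fin N)) (f : Fn N) : Fn N :=
  l.foldr (fun a g => (Dtot a)^[K a] ∘ g) id f

lemma DPow_eq_DLl (K : MI N) (f : Fn N) : DPow K f = DLl K (List.finRange N) f := rfl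

lemma DLl_nil (K : MI N) (f : Fn N) : DLl K [] f = f := rfl

lemma DLl_cons (K : MI N) (a : Fin N) (l : List (Fin N)) (f : Fn N) :
    DLl K (a :: l) f = (Dtot a)^[K a] (DLl K l f) := rfl

lemma DLl_zero (K : MI N) (l : List (Fin N)) : DLl K l (0 : Fn N) = 0 := by
  induction l with
  | nil => rfl
  | cons a t ih => rw [DLl_cons, ih, Dtot_iterate_zero]

lemma isLocal_DLl {f : Fn N} (hf : IsLocal f) (K : MI N) (l : List (Fin N)) :
    IsLocal (DLl K l f) := by
  induction l with
  | nil => exact hf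
  | cons a t ih => rw [DLl_cons]; exact isLocal_Dtot_iterate ih a (K a)

lemma DLl_add {f₁ f₂ : Fn N} (h₁ : IsLocal f₁) (h₂ : IsLocal f₂) (K : MI N)
    (l : List (Fin N)) : DLl K l (f₁ + f₂) = DLl K l f₁ + DLl K l f₂ := by
  induction l with
  | nil => rfl
  | cons a t ih =>
      rw [DLl_cons, DLl_cons, DLl_cons, ih,
        Dtot_iterate_add (isLocal_DLl h₁ K t) (isLocal_DLl h₂ K t) a (K a)]

lemma DLl_congr {K K' : MI N} {l : List (Fin N)} (h : ∀ a ∈ l, K a = K' a) (f : Fn N) :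
    DLl K l f = DLl K' l f := by
  induction l with
  | nil => rfl
  | cons a t ih =>
      rw [DLl_cons, DLl_cons, h a List.mem_cons_self,
        ih fun c hc => h c (List.mem_cons_of_mem a hc)]

lemma DLl_Dtot {f : Fn N} (hf : IsLocal f) (K : MI N) (i : Fin N) (l : List (Fin N)) :
    DLl K l (Dtot i f) = Dtot i (DLl K l f) := by
  induction l with
  | nil => rfl
  | cons a t ih =>
      rw [DLl_cons, DLl_cons, ih, ← Dtot_iterate_comm (isLocal_DLl hf K t) i a (K a)]

lemma DLl_inc {f : Fn N} (hf : IsLocal f) (K : MI N) (i : Fin N) :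
    ∀ (l : List (Fin N)), i ∈ l → l.Nodup → DLl (inc i K) l f = Dtot i (DLl K l f) := by
  intro l
  induction l with
  | nil => intro h; simp at h
  | cons a t ih =>
      intro hmem hnd
      by_cases hia : i = a
      · subst hia
        have hit : i ∉ t := (List.nodup_cons.mp hnd).1
        have hstep : DLl (inc i K) t f = DLl K t f :=
          DLl_congr (fun c hc => by
            have : c ≠ i := fun hci => hit (hci ▸ hc)
            simp [inc, Function.update_of_ne this]) f
        rw [DLl_cons, DLl_cons, hstep]
        have hKi : inc i K i = K i + 1 := by simp [inc]
        rw [hKi, Function.iterate_succ_apply']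
      · have hit : i ∈ t := by
          rcases List.mem_cons.mp hmem with h | h
          · exact absurd h hia
          · exact h
        have hnd' : t.Nodup := (List.nodup_cons.mp hnd).2
        rw [DLl_cons, DLl_cons]
        have hKa : inc i K a = K a := by
          simp [inc, Function.update_of_ne (fun h => hia h.symm : a ≠ i)]
        rw [hKa, ih hit hnd', Dtot_iterate_comm (isLocal_DLl hf K t) i a (K a)]

lemma DPow_add {f₁ f₂ : Fn N} (h₁ : IsLocal f₁) (h₂ : IsLocal f₂) (K : MI N) :
    DPow K (f₁ + f₂) = DPow K f₁ + DPow K f₂ := by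
  rw [DPow_eq_DLl, DPow_eq_DLl, DPow_eq_DLl, DLl_add h₁ h₂]

lemma isLocal_DPow {f : Fn N} (hf : IsLocal f) (K : MI N) : IsLocal (DPow K f) := by
  rw [DPow_eq_DLl]; exact isLocal_DLl hf K _

lemma DPow_Dtot {f : Fn N} (hf : IsLocal f) (K : MI N) (i : Fin N) :
    DPow K (Dtot i f) = Dtot i (DPow K f) := by
  rw [DPow_eq_DLl, DPow_eq_DLl]; exact DLl_Dtot hf K i _

lemma DPow_inc {f : Fn N} (hf : IsLocal f) (K : MI N) (i : Fin N) :
    DPow (inc i K) f = Dtot i (DPow K f) := by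
  rw [DPow_eq_DLl, DPow_eq_DLl]
  exact DLl_inc hf K i _ (List.mem_finRange i) (List.nodup_finRange N)

/-! ### Vertical iterated derivatives -/

lemma isLocalOn_pderivU_iterate {S : Finset (MI N)} {f : Fn N} (h : IsLocalOn S f)
    (J : MI N) (m : ℕ) : IsLocalOn S ((pderivU J)^[m] f) := by
  induction m with
  | zero => exact h
  | succ m ih => rw [Function.iterate_succ_apply']; exact isLocalOn_pderivU ih J

lemma isLocalOn_foldrU {S : Finset (MI N)} (α : MI N →₀ ℕ) :
    ∀ (l : List (MI N)) {f : Fn N}, IsLocalOn S f →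
      IsLocalOn S (l.foldr (fun J g => (pderivU J)^[α J] ∘ g) id f) := by
  intro l
  induction l with
  | nil => intro f hf; exact hf
  | cons a t ih =>
      intro f hf
      exact isLocalOn_pderivU_iterate (ih hf) a (α a)

lemma foldrU_kill {S : Finset (MI N)} (α : MI N →₀ ℕ) {J : MI N} (hJS : J ∉ S)
    (hα : α J ≠ 0) :
    ∀ (l : List (MI N)), J ∈ l → ∀ {f : Fn N}, IsLocalOn S f →
      l.foldr (fun K g => (pderivU K)^[α K] ∘ g) id f = 0 := by
  intro l
  induction l with
  | nil => intro h; simp at h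
  | cons a t ih =>
      intro hmem f hf
      show (pderivU a)^[α a] (t.foldr (fun K g => (pderivU K)^[α K] ∘ g) id f) = 0
      by_cases hJa : J = a
      · subst hJa
        have hloc : IsLocalOn S (t.foldr (fun K g => (pderivU K)^[α K] ∘ g) id f) :=
          isLocalOn_foldrU α t hf
        obtain ⟨m, hm⟩ : ∃ m, α J = m + 1 :=
          ⟨α J - 1, (Nat.succ_pred_eq_of_pos (Nat.pos_of_ne_zero hα)).symm⟩
        rw [hm, Function.iterate_succ_apply, pderivU_eq_zero_of_not_mem hloc hJS,
          pderivU_iterate_zero]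
      · have hJt : J ∈ t := by
          rcases List.mem_cons.mp hmem with h | h
          · exact absurd h hJa
          · exact h
        rw [ih hJt hf, pderivU_iterate_zero]

lemma isLocalOn_UPow {S : Finset (MI N)} {f : Fn N} (h : IsLocalOn S f) (α : MI N →₀ ℕ) :
    IsLocalOn S (UPow α f) :=
  isLocalOn_foldrU α _ h

lemma isLocal_UPow {f : Fn N} (h : IsLocal f) (α : MI N →₀ ℕ) : IsLocal (UPow α f) := by
  obtain ⟨S, hS⟩ := isLocal_iff.mp h
  exact isLocal_iff.mpr ⟨S, isLocalOn_UPow hS α⟩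

lemma UPow_kill {S : Finset (MI N)} {f : Fn N} (h : IsLocalOn S f) {α : MI N →₀ ℕ}
    {J : MI N} (hJα : J ∈ α.support) (hJS : J ∉ S) : UPow α f = 0 :=
  foldrU_kill α hJS (Finsupp.mem_support_iff.mp hJα) _ (Finset.mem_toList.mpr hJα) h


/-! ### Index combinatorics -/

def dec (i : Fin N) (K : MI N) : MI N := Function.update K i (K i - 1)

lemma dec_inc (i : Fin N) (K : MI N) : dec i (inc i K) = K := by
  funext l
  by_cases h : l = i
  · subst h; simp [dec, inc]
  · simp [dec, inc, Function.update_of_ne h]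

lemma inc_dec {i : Fin N} {K : MI N} (h : K i ≠ 0) : inc i (dec i K) = K := by
  funext l
  by_cases hl : l = i
  · subst hl
    simp only [inc, dec, Function.update_self]
    omega
  · simp [inc, dec, Function.update_of_ne hl]

lemma inc_apply_self (i : Fin N) (K : MI N) : inc i K i = K i + 1 := by
  simp [inc]

lemma sum_inc (i : Fin N) (K : MI N) : ∑ l, inc i K l = (∑ l, K l) + 1 := by
  unfold inc
  rw [Finset.sum_update_of_mem (Finset.mem_univ i)]
  have := (Finset.add_sum_erase Finset.univ K (Finset.mem_univ i))
  rw [Finset.erase_eq] at this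
  omega

lemma inc_injective (i : Fin N) : Function.Injective (inc i) := by
  intro K K' h
  funext l
  by_cases hl : l = i
  · subst hl
    have := congrFun h l
    simp only [inc, Function.update_self] at this
    omega
  · have := congrFun h l
    simpa [inc, Function.update_of_ne hl] using this

section Main

variable {n : ℕ} [NeZero n]

def mapInc (i : Fin N) (Iα : Idx N n) : Idx N n :=
  (Function.update Iα.1 0 (inc i (Iα.1 0)), Iα.2)

def mapDec (i : Fin N) (Iα : Idx N n) : Idx N n :=
  (Function.update Iα.1 0 (dec i (Iα.1 0)), Iα.2)

lemma mapDec_mapInc (i : Fin N) (Iα : Idx N n) : mapDec i (mapInc i Iα) = Iα := by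
  obtain ⟨I, α⟩ := Iα
  simp [mapDec, mapInc, Function.update_idem, dec_inc, Function.update_eq_self]

lemma mapInc_mapDec (i : Fin N) {Iα : Idx N n} (h : Iα.1 0 i ≠ 0) :
    mapInc i (mapDec i Iα) = Iα := by
  obtain ⟨I, α⟩ := Iα
  simp only [mapInc, mapDec, Function.update_idem, Function.update_self]
  rw [inc_dec h, Function.update_eq_self]

lemma mapInc_injective (i : Fin N) : Function.Injective (mapInc i : Idx N n → Idx N n) :=
  Function.LeftInverse.injective (mapDec_mapInc i)

/-- The shifted coefficient data presenting `d/dx^i ∘ A`. -/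
noncomputable def qShift (q : OpData N n) (i : Fin N) : OpData N n :=
  fun Iα => Dtot i (q Iα) + if (Iα.1 0) i = 0 then 0 else q (mapDec i Iα)

/-- The product of the arguments appearing in the polarized realization. -/
noncomputable def prodFn (f : Fin n → Fn N) (Iα : Idx N n) : Fn N :=
  fun p => ∏ j, if j = (0 : Fin n) then UPow (Iα.2 j) (f j) p
    else DPow (Iα.1 j) (UPow (Iα.2 j) (f j)) p

lemma realizeP_eq (q : OpData N n) (f : Fin n → Fn N) (pt : JetPt N) :
    realizeP q f pt = ∑' Iα : Idx N n, q Iα pt * DPow (Iα.1 0) (prodFn f Iα) pt := rfl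

lemma prodFn_mapInc (i : Fin N) (f : Fin n → Fn N) (Iα : Idx N n) :
    prodFn f (mapInc i Iα) = prodFn f Iα := by
  funext p
  refine Finset.prod_congr rfl fun j _ => ?_
  by_cases hj : j = (0 : Fin n)
  · simp [hj, mapInc]
  · simp [hj, mapInc, Function.update_of_ne hj]

lemma prodFn_eq_prod (f : Fin n → Fn N) (Iα : Idx N n) :
    prodFn f Iα = ∏ j, (if j = (0 : Fin n) then UPow (Iα.2 j) (f j)
      else DPow (Iα.1 j) (UPow (Iα.2 j) (f j))) := by
  funext p
  rw [Finset.prod_apply]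
  exact Finset.prod_congr rfl fun j _ => (apply_ite (fun h : Fn N => h p) _ _ _).symm

lemma isLocal_prodFn {f : Fin n → Fn N} (hf : LocalTuple f) (Iα : Idx N n) :
    IsLocal (prodFn f Iα) := by
  rw [prodFn_eq_prod]
  refine isLocal_prod _ _ fun j _ => ?_
  by_cases hj : j = (0 : Fin n)
  · rw [if_pos hj]; exact isLocal_UPow (hf j) _
  · rw [if_neg hj]; exact isLocal_DPow (isLocal_UPow (hf j) _) _

lemma prodFn_zero_of_deg {f : Fin n → Fn N} (S : Fin n → Finset (MI N))
    (hS : ∀ j, IsLocalOn (S j) (f j)) {Iα : Idx N n}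
    (h : ¬ (∑ j, degf (Iα.2 j)) ≤ ∑ j, (S j).sup fun J => ∑ l, J l) :
    prodFn f Iα = 0 := by
  have hex : ∃ j, ¬ degf (Iα.2 j) ≤ (S j).sup fun J => ∑ l, J l := by
    by_contra hc
    push_neg at hc
    exact h (Finset.sum_le_sum fun j _ => hc j)
  obtain ⟨j, hj⟩ := hex
  push_neg at hj
  have hne : (Iα.2 j).support.Nonempty := by
    by_contra hc
    rw [Finset.not_nonempty_iff_eq_empty] at hc
    have h0 : degf (Iα.2 j) = 0 := by simp [degf, hc]
    rw [h0] at hj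
    exact Nat.not_lt_zero _ hj
  obtain ⟨J, hJmem, hJval⟩ := Finset.exists_mem_eq_sup _ hne fun J : MI N => ∑ l, J l
  have hJval' : degf (Iα.2 j) = ∑ l, J l := hJval
  have hJS : J ∉ S j := by
    intro hmem
    have hle := Finset.le_sup (f := fun J : MI N => ∑ l, J l) hmem
    rw [hJval'] at hj
    exact absurd hle (not_le.mpr hj)
  have hU : UPow (Iα.2 j) (f j) = 0 := UPow_kill (hS j) hJmem hJS
  funext p
  refine Finset.prod_eq_zero (Finset.mem_univ j) ?_
  by_cases hj0 : j = (0 : Fin n)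
  · rw [if_pos hj0, hU]; rfl
  · rw [if_neg hj0, hU, DPow_zero]; rfl

lemma realizeP_sum_eq (q : OpData N n) {f : Fin n → Fn N} (S : Fin n → Finset (MI N))
    (hS : ∀ j, IsLocalOn (S j) (f j)) (F : Finset (Idx N n))
    (hF : ∀ Iα : Idx N n, q Iα ≠ 0 →
      (∑ j, degf (Iα.2 j)) ≤ (∑ j, (S j).sup fun J => ∑ l, J l) → Iα ∈ F)
    (pt : JetPt N) :
    realizeP q f pt = ∑ Iα ∈ F, q Iα pt * DPow (Iα.1 0) (prodFn f Iα) pt := by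
  rw [realizeP_eq]
  refine tsum_eq_sum fun Iα hIα => ?_
  by_cases hq0 : q Iα = 0
  · rw [hq0]; simp
  · have hdeg : ¬ (∑ j, degf (Iα.2 j)) ≤ ∑ j, (S j).sup fun J => ∑ l, J l :=
      fun hle => hIα (hF Iα hq0 hle)
    rw [prodFn_zero_of_deg S hS hdeg, DPow_zero]
    simp

lemma isLocal_qShift {q : OpData N n} (hq : Good q) (i : Fin N) (Iα : Idx N n) :
    IsLocal (qShift q i Iα) := by
  refine (isLocal_Dtot (hq.1 Iα) i).add ?_
  by_cases h : (Iα.1 0) i = 0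
  · rw [if_pos h]; exact isLocal_zero
  · rw [if_neg h]; exact hq.1 _

lemma qShift_ne_zero {q : OpData N n} {i : Fin N} {Iα : Idx N n}
    (h : qShift q i Iα ≠ 0) :
    q Iα ≠ 0 ∨ ((Iα.1 0) i ≠ 0 ∧ q (mapDec i Iα) ≠ 0) := by
  by_cases h1 : q Iα = 0
  · right
    by_cases h2 : (Iα.1 0) i = 0
    · exfalso; apply h
      show Dtot i (q Iα) + _ = 0
      rw [h1, Dtot_zero, if_pos h2, add_zero]
    · refine ⟨h2, fun h3 => ?_⟩
      apply h
      show Dtot i (q Iα) + _ = 0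
      rw [h1, Dtot_zero, if_neg h2, h3, add_zero]
  · left; exact h1

lemma good_qShift {q : OpData N n} (hq : Good q) (i : Fin N) : Good (qShift q i) := by
  refine ⟨isLocal_qShift hq i, fun m => ?_⟩
  refine Set.Finite.subset ((hq.2 m).union ((hq.2 m).image (mapInc i))) ?_
  rintro Iα ⟨hne, hdeg⟩
  rcases qShift_ne_zero hne with h | ⟨h0, h1⟩
  · exact Set.mem_union_left _ ⟨h, hdeg⟩
  · refine Set.mem_union_right _ ⟨mapDec i Iα, ⟨h1, ?_⟩, mapInc_mapDec i h0⟩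
    exact hdeg

end Main


section Main2

variable {n : ℕ} [NeZero n]

lemma presents_qShift (q : OpData N n) (hq : Good q) (i : Fin N) :
    Presents (qShift q i) (fun f : Fin n → Fn N => Dtot i (realizeP q f)) := by
  intro f hf pt
  have hfS : ∀ j, ∃ S, IsLocalOn S (f j) := fun j => isLocal_iff.mp (hf j)
  choose S hS using hfS
  classical
  set m0 := ∑ j, (S j).sup (fun J : MI N => ∑ l, J l) with hm0
  set F : Finset (Idx N n) := (hq.2 m0).toFinset with hFdef
  set F2 : Finset (Idx N n) := F ∪ F.image (mapInc i) with hF2def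
  have hFmem : ∀ Iα : Idx N n, q Iα ≠ 0 → (∑ j, degf (Iα.2 j)) ≤ m0 → Iα ∈ F :=
    fun Iα h1 h2 => (Set.Finite.mem_toFinset _).mpr ⟨h1, h2⟩
  have hFdeg : ∀ Iα ∈ F, (∑ j, degf (Iα.2 j)) ≤ m0 :=
    fun Iα h => ((Set.Finite.mem_toFinset _).mp h).2
  have hF2deg : ∀ Iα ∈ F2, (∑ j, degf (Iα.2 j)) ≤ m0 := by
    intro Iα h
    rcases Finset.mem_union.mp h with h | h
    · exact hFdeg Iα h
    · obtain ⟨Iβ, hIβ, rfl⟩ := Finset.mem_image.mp h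
      exact hFdeg Iβ hIβ
  have hF2mem : ∀ Iα : Idx N n, qShift q i Iα ≠ 0 → (∑ j, degf (Iα.2 j)) ≤ m0 → Iα ∈ F2 := by
    intro Iα h1 h2
    rcases qShift_ne_zero h1 with h | ⟨h0, h3⟩
    · exact Finset.mem_union_left _ (hFmem Iα h h2)
    · exact Finset.mem_union_right _
        (Finset.mem_image.mpr ⟨mapDec i Iα, hFmem _ h3 h2, mapInc_mapDec i h0⟩)
  have hP : ∀ Iα : Idx N n, IsLocal (prodFn f Iα) := isLocal_prodFn hf
  have hterm : ∀ Iα : Idx N n, IsLocal (q Iα * DPow (Iα.1 0) (prodFn f Iα)) :=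
    fun Iα => (hq.1 Iα).mul (isLocal_DPow (hP Iα) _)
  have hrq : realizeP q f = ∑ Iα ∈ F, q Iα * DPow (Iα.1 0) (prodFn f Iα) := by
    funext pt'
    rw [Finset.sum_apply, realizeP_sum_eq q S hS F hFmem pt']
    rfl
  show Dtot i (realizeP q f) pt = realizeP (qShift q i) f pt
  rw [hrq, Dtot_finset_sum F _ (fun Iα _ => hterm Iα) i, Finset.sum_apply]
  have hLterm : ∀ Iα ∈ F, Dtot i (q Iα * DPow (Iα.1 0) (prodFn f Iα)) pt
      = Dtot i (q Iα) pt * DPow (Iα.1 0) (prodFn f Iα) pt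
        + q Iα pt * DPow (inc i (Iα.1 0)) (prodFn f Iα) pt := by
    intro Iα _
    rw [Dtot_mul (hq.1 Iα) (isLocal_DPow (hP Iα) _) i, Pi.add_apply, Pi.mul_apply, Pi.mul_apply,
      DPow_inc (hP Iα) _ i]
  rw [Finset.sum_congr rfl hLterm, Finset.sum_add_distrib]
  rw [realizeP_sum_eq (qShift q i) S hS F2 hF2mem pt]
  have hsplit : ∀ Iα ∈ F2, qShift q i Iα pt * DPow (Iα.1 0) (prodFn f Iα) pt
      = Dtot i (q Iα) pt * DPow (Iα.1 0) (prodFn f Iα) pt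
        + (if (Iα.1 0) i = 0 then 0 else q (mapDec i Iα) pt)
            * DPow (Iα.1 0) (prodFn f Iα) pt := by
    intro Iα _
    have hval : qShift q i Iα pt
        = Dtot i (q Iα) pt + (if (Iα.1 0) i = 0 then 0 else q (mapDec i Iα) pt) := by
      show (Dtot i (q Iα) + _) pt = _
      rw [Pi.add_apply]
      congr 1
      by_cases h : (Iα.1 0) i = 0
      · rw [if_pos h, if_pos h]; rfl
      · rw [if_neg h, if_neg h]
    rw [hval, add_mul]
  rw [Finset.sum_congr rfl hsplit, Finset.sum_add_distrib]
  congr 1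
  · refine Finset.sum_subset Finset.subset_union_left ?_
    intro Iα hIα2 hIαF
    by_cases hq0 : q Iα = 0
    · rw [hq0, Dtot_zero]; simp
    · exact absurd (hFmem Iα hq0 (hF2deg Iα hIα2)) hIαF
  · calc
      ∑ Iα ∈ F, q Iα pt * DPow (inc i (Iα.1 0)) (prodFn f Iα) pt
          = ∑ Iα ∈ F, (if ((mapInc i Iα).1 0) i = 0 then 0 else q (mapDec i (mapInc i Iα)) pt)
              * DPow ((mapInc i Iα).1 0) (prodFn f (mapInc i Iα)) pt := by
            refine Finset.sum_congr rfl fun Iα _ => ?_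
            have h1 : (mapInc i Iα).1 0 = inc i (Iα.1 0) := by simp [mapInc]
            rw [prodFn_mapInc, mapDec_mapInc, h1,
              if_neg (by rw [inc_apply_self]; exact Nat.succ_ne_zero _)]
      _ = ∑ Iα ∈ F.image (mapInc i), (if (Iα.1 0) i = 0 then 0 else q (mapDec i Iα) pt)
              * DPow (Iα.1 0) (prodFn f Iα) pt := by
            rw [Finset.sum_image (fun x _ y _ h => mapInc_injective i h)]
      _ = ∑ Iα ∈ F2, (if (Iα.1 0) i = 0 then 0 else q (mapDec i Iα) pt)
              * DPow (Iα.1 0) (prodFn f Iα) pt := by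
            refine Finset.sum_subset Finset.subset_union_right ?_
            intro Iα hIα2 hIαIm
            by_cases h0 : (Iα.1 0) i = 0
            · rw [if_pos h0, zero_mul]
            · by_cases hq0 : q (mapDec i Iα) = 0
              · rw [if_neg h0, hq0]; simp
              · exact absurd (Finset.mem_image.mpr
                  ⟨mapDec i Iα, hFmem _ hq0 (hF2deg Iα hIα2), mapInc_mapDec i h0⟩) hIαIm

lemma chiZero_qShift (q : OpData N n) (hq : Good q) (i : Fin N) :
    ∀ f, LocalTuple f → ∀ pt, realizeP (chiData (qShift q i)) f pt = 0 := by
  intro f hf pt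
  classical
  have hzero : ∀ Iα : Idx N n, chiData (qShift q i) Iα = 0 := by
    intro Iα
    unfold chiData
    by_cases h0 : Iα.1 0 = 0
    · rw [if_pos h0]
      funext pt'
      simp only [Pi.zero_apply]
      set c : MI N → Fn N := fun K => q (Function.update Iα.1 0 K, Iα.2) with hc
      have hcl : ∀ K, IsLocal (c K) := fun K => hq.1 _
      set m := ∑ j, degf (Iα.2 j) with hm
      set G : Finset (MI N) := (hq.2 m).toFinset.image (fun Iβ : Idx N n => Iβ.1 0) with hG
      have hcG : ∀ K, c K ≠ 0 → K ∈ G := by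
        intro K h
        exact Finset.mem_image.mpr ⟨(Function.update Iα.1 0 K, Iα.2),
          (Set.Finite.mem_toFinset _).mpr ⟨h, le_rfl⟩, by simp⟩
      have hqs : ∀ K : MI N, qShift q i (Function.update Iα.1 0 K, Iα.2)
          = Dtot i (c K) + (if K i = 0 then 0 else c (dec i K)) := by
        intro K
        unfold qShift
        simp only [hc, mapDec, Function.update_idem, Function.update_self]
      have hsummand : ∀ K : MI N, (-1 : ℝ) ^ (∑ l, K l)
            * DPow K (qShift q i (Function.update Iα.1 0 K, Iα.2)) pt'
          = ((-1 : ℝ) ^ (∑ l, K l) * DPow (inc i K) (c K) pt')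
            + (if K i = 0 then 0
                else (-1 : ℝ) ^ (∑ l, K l) * DPow K (c (dec i K)) pt') := by
        intro K
        rw [hqs K]
        have hite : IsLocal (if K i = 0 then (0 : Fn N) else c (dec i K)) := by
          by_cases h : K i = 0
          · rw [if_pos h]; exact isLocal_zero
          · rw [if_neg h]; exact hcl _
        rw [DPow_add (isLocal_Dtot (hcl K) i) hite K, Pi.add_apply, mul_add]
        congr 1
        · rw [DPow_Dtot (hcl K) K i, ← DPow_inc (hcl K) K i]
        · by_cases h : K i = 0
          · rw [if_pos h, if_pos h, DPow_zero]; simp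
          · rw [if_neg h, if_neg h]
      rw [tsum_congr hsummand]
      have ha : ∀ K ∉ G, (-1 : ℝ) ^ (∑ l, K l) * DPow (inc i K) (c K) pt' = 0 := by
        intro K hK
        have hc0 : c K = 0 := by
          by_contra h; exact hK (hcG K h)
        rw [hc0, DPow_zero]; simp
      have hb : ∀ K ∉ G.image (inc i),
          (if K i = 0 then (0:ℝ)
            else (-1 : ℝ) ^ (∑ l, K l) * DPow K (c (dec i K)) pt') = 0 := by
        intro K hK
        by_cases h : K i = 0
        · rw [if_pos h]
        · rw [if_neg h]
          have hc0 : c (dec i K) = 0 := by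
            by_contra hcc
            exact hK (Finset.mem_image.mpr ⟨dec i K, hcG _ hcc, inc_dec h⟩)
          rw [hc0, DPow_zero]; simp
      have hsa : Summable (fun K : MI N => (-1 : ℝ) ^ (∑ l, K l) * DPow (inc i K) (c K) pt') :=
        summable_of_ne_finset_zero ha
      have hsb : Summable (fun K : MI N => if K i = 0 then (0:ℝ)
          else (-1 : ℝ) ^ (∑ l, K l) * DPow K (c (dec i K)) pt') :=
        summable_of_ne_finset_zero hb
      rw [Summable.tsum_add hsa hsb]
      have hsupp : Function.support (fun K : MI N => if K i = 0 then (0:ℝ)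
          else (-1 : ℝ) ^ (∑ l, K l) * DPow K (c (dec i K)) pt') ⊆ Set.range (inc i) := by
        intro K hK
        by_cases h : K i = 0
        · exact absurd (if_pos h) hK
        · exact ⟨dec i K, inc_dec h⟩
      rw [← Function.Injective.tsum_eq (inc_injective i) hsupp]
      have hbi : ∀ K : MI N, (if (inc i K) i = 0 then (0:ℝ)
            else (-1 : ℝ) ^ (∑ l, inc i K l) * DPow (inc i K) (c (dec i (inc i K))) pt')
          = - ((-1 : ℝ) ^ (∑ l, K l) * DPow (inc i K) (c K) pt') := by
        intro K
        rw [if_neg (by rw [inc_apply_self]; exact Nat.succ_ne_zero _), dec_inc, sum_inc,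
          pow_succ]
        ring
      rw [tsum_congr hbi, tsum_neg]
      exact add_neg_cancel _
    · rw [if_neg h0]
  have hterm : ∀ Iα : Idx N n,
      chiData (qShift q i) Iα pt * DPow (Iα.1 0) (prodFn f Iα) pt = 0 := by
    intro Iα; rw [hzero Iα]; simp
  rw [realizeP_eq, tsum_congr hterm]
  exact tsum_zero

end Main2

/-- For any `A ∈ LDO(n)` and `1 ≤ i ≤ N`, the characteristic of the
post-composition of `A` with the total derivative vanishes: `χ((d/dx^i) ∘ A) = 0`. -/
theorem chi_postcomp_Dtot {N n : ℕ} [NeZero n] (q : OpData N n) (hq : Good q) (i : Fin N) :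
    ChiZero (fun f : Fin n → Fn N => Dtot i (realizeP q f)) :=
  ⟨qShift q i, good_qShift hq i, presents_qShift q hq i, chiZero_qShift q hq i⟩

end JetBundle
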